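/- Let p be a prime, let k be a positive integer, and let M = sift({p^k}). Then M = {n ∈ ℕ+ : val_p(n) mod 2k ∈ {0, 1, ..., k−1}}. -/
import Mathlib

/-- Membership in the selective sifting of `S`: `0 < n`, and `n` cannot be written as
`n = a·b` with `a ∈ S` and `b` itself in the selective sifting (necessarily `b < n`). -/
def siftMem (S : Set ℕ) : ℕ → Prop := fun n =>
  Nat.strongRecOn n (fun n ih =>
    0 < n ∧ ¬ ∃ a ∈ S, ∃ b, ∃ hb : b < n, ih b hb ∧ n = a * b)

/-- The selective sifting `sift S ⊆ ℕ+`. -/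
def sift (S : Set ℕ) : Set ℕ := {n | siftMem S n}

lemma siftMem_iff (S : Set ℕ) (n : ℕ) :
    siftMem S n ↔ 0 < n ∧ ¬ ∃ a ∈ S, ∃ b, b < n ∧ siftMem S b ∧ n = a * b := by
  rw [siftMem, Nat.strongRecOn]
  rw [WellFounded.fix_eq]
  simp only [siftMem, Nat.strongRecOn, exists_prop]

lemma aux_mod (k v : ℕ) (hk : 0 < k) (h : k ≤ v) :
    (v - k) % (2 * k) < k ↔ ¬ v % (2 * k) < k := by
  have h2k : 0 < 2 * k := by omega
  obtain ⟨q, r, hr, hdm⟩ : ∃ q r, r < 2 * k ∧ 2 * k * q + r = v :=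
    ⟨_, _, Nat.mod_lt _ h2k, Nat.div_add_mod v (2 * k)⟩
  have hrm : v % (2 * k) = r := by rw [← hdm, Nat.mul_add_mod, Nat.mod_eq_of_lt hr]
  rw [hrm]
  rcases le_or_gt k r with hkr | hkr
  · have h1 : v - k = 2 * k * q + (r - k) := by omega
    rw [h1, Nat.mul_add_mod, Nat.mod_eq_of_lt (by omega)]
    omega
  · have hq : 1 ≤ q := by
      by_contra h0
      have : q = 0 := by omega
      rw [this, Nat.mul_zero, Nat.zero_add] at hdm
      omega
    have h2 : 2 * k * q = 2 * k * (q - 1) + 2 * k := by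
      have : q = (q - 1) + 1 := by omega
      rw [this, Nat.mul_succ]
      congr 1
    have h1 : v - k = 2 * k * (q - 1) + (k + r) := by omega
    rw [h1, Nat.mul_add_mod, Nat.mod_eq_of_lt (by omega)]
    omega

/-- For a prime `p` and `k ≥ 1`,
`sift {p ^ k} = {n ∈ ℕ+ : val_p(n) mod 2k ∈ {0, 1, …, k-1}}`. -/
theorem sift_prime_power (p k : ℕ) (hp : p.Prime) (hk : 0 < k) :
    sift {p ^ k} = {n | 0 < n ∧ padicValNat p n % (2 * k) < k} := by
  haveI : Fact p.Prime := ⟨hp⟩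
  have hp1 : 1 < p ^ k := Nat.one_lt_pow (by omega) hp.one_lt
  have key : ∀ n, siftMem {p ^ k} n ↔ (0 < n ∧ padicValNat p n % (2 * k) < k) := by
    intro n
    induction n using Nat.strong_induction_on with
    | _ n ih =>
      rw [siftMem_iff]
      simp only [Set.mem_singleton_iff, exists_eq_left]
      constructor
      · rintro ⟨hn, hnot⟩
        refine ⟨hn, ?_⟩
        by_contra hcon
        have hkv : k ≤ padicValNat p n :=
          le_trans (not_lt.mp hcon) (Nat.mod_le _ _)
        have hdvd : p ^ k ∣ n := (padicValNat_dvd_iff_le hn.ne').mpr hkv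
        obtain ⟨b, hb⟩ := hdvd
        have hb0 : 0 < b := by
          rcases Nat.eq_zero_or_pos b with h0 | h0
          · rw [h0, Nat.mul_zero] at hb; omega
          · exact h0
        have hblt : b < n := by
          calc b < 2 * b := by omega
          _ ≤ p ^ k * b := Nat.mul_le_mul_right b hp1
          _ = n := hb.symm
        have hvb : padicValNat p b = padicValNat p n - k := by
          have : padicValNat p n = k + padicValNat p b := by
            rw [hb, padicValNat.mul (by positivity) hb0.ne', padicValNat.prime_pow]
          omega
        have hsb : siftMem {p ^ k} b := by
          rw [ih b hblt]
          exact ⟨hb0, by rw [hvb]; exact (aux_mod k _ hk hkv).mpr hcon⟩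
        exact hnot ⟨b, hblt, hsb, hb⟩
      · rintro ⟨hn, hv⟩
        refine ⟨hn, ?_⟩
        rintro ⟨b, hblt, hsb, hnb⟩
        have hb0 : 0 < b := ((siftMem_iff _ _).mp hsb).1
        have hvn : padicValNat p n = k + padicValNat p b := by
          rw [hnb, padicValNat.mul (by positivity) hb0.ne', padicValNat.prime_pow]
        have hbm := ((ih b hblt).mp hsb).2
        have hkv : k ≤ padicValNat p n := by omega
        have hbv : padicValNat p b = padicValNat p n - k := by omega
        rw [hbv] at hbm
        exact (aux_mod k _ hk hkv).mp hbm hv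
  ext n
  exact key n
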